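/- If M is a quarter-turn symmetric alternating sign matrix of even size 2L, then 2L is a multiple of 4. In particular, for every integer N ≥ 0 there exists no quarter-turn symmetric alternating sign matrix of size 4N+2. -/
import Mathlib


open Finset

/-- An alternating sign matrix of size `n`: entries in `{-1,0,1}`, all partial sums
along each row and each column lie in `{0,1}`, and each full row and column sums to `1`. -/
def IsASM {n : ℕ} (M : Fin n → Fin n → ℤ) : Prop :=
  (∀ i j, M i j = -1 ∨ M i j = 0 ∨ M i j = 1) ∧
  (∀ i k : Fin n, (∑ j ∈ Finset.univ.filter (fun j => j ≤ k), M i j) = 0 ∨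
                  (∑ j ∈ Finset.univ.filter (fun j => j ≤ k), M i j) = 1) ∧
  (∀ j k : Fin n, (∑ i ∈ Finset.univ.filter (fun i => i ≤ k), M i j) = 0 ∨
                  (∑ i ∈ Finset.univ.filter (fun i => i ≤ k), M i j) = 1) ∧
  (∀ i, ∑ j, M i j = 1) ∧
  (∀ j, ∑ i, M i j = 1)

/-- Half-turn symmetry: `M_{n+1-i, n+1-j} = M_{i,j}` (1-based indexing). -/
def IsHT {n : ℕ} (M : Fin n → Fin n → ℤ) : Prop :=
  ∀ i j : Fin n, M i.rev j.rev = M i j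

/-- Quarter-turn symmetry: `M_{i,j} = M_{j, n+1-i}` (1-based indexing). -/
def IsQT {n : ℕ} (M : Fin n → Fin n → ℤ) : Prop :=
  ∀ i j : Fin n, M i j = M j i.rev

/-- The number of ASMs of size `n`. -/
noncomputable def numASM (n : ℕ) : ℕ := Nat.card {M : Fin n → Fin n → ℤ // IsASM M}

/-- The number of half-turn symmetric ASMs of size `n`. -/
noncomputable def numHT (n : ℕ) : ℕ := Nat.card {M : Fin n → Fin n → ℤ // IsASM M ∧ IsHT M}

/-- The number of quarter-turn symmetric ASMs of size `n`. -/
noncomputable def numQT (n : ℕ) : ℕ := Nat.card {M : Fin n → Fin n → ℤ // IsASM M ∧ IsQT M}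

/-- The central quadruple of a matrix of size `4N+2` (entries at 1-based positions
`2N+1, 2N+2`) equals `(0,-1,-1,0)`. -/
def CentralNeg (N : ℕ) (M : Fin (4*N+2) → Fin (4*N+2) → ℤ) : Prop :=
  M ⟨2*N, by omega⟩ ⟨2*N, by omega⟩ = 0 ∧
  M ⟨2*N, by omega⟩ ⟨2*N+1, by omega⟩ = -1 ∧
  M ⟨2*N+1, by omega⟩ ⟨2*N, by omega⟩ = -1 ∧
  M ⟨2*N+1, by omega⟩ ⟨2*N+1, by omega⟩ = 0

/-- The central quadruple of a matrix of size `4N+2` equals `(1,0,0,1)`. -/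
def CentralPos (N : ℕ) (M : Fin (4*N+2) → Fin (4*N+2) → ℤ) : Prop :=
  M ⟨2*N, by omega⟩ ⟨2*N, by omega⟩ = 1 ∧
  M ⟨2*N, by omega⟩ ⟨2*N+1, by omega⟩ = 0 ∧
  M ⟨2*N+1, by omega⟩ ⟨2*N, by omega⟩ = 0 ∧
  M ⟨2*N+1, by omega⟩ ⟨2*N+1, by omega⟩ = 1

/-- A matrix of size `4N+2` is quasi-invariant under a quarter-turn:
`M_{i,j} = M_{j, 4N+3-i}` for all `(i,j)` except when both indices are central
(1-based values in `{2N+1, 2N+2}`), and the central quadruple is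
`(0,-1,-1,0)` or `(1,0,0,1)`. -/
def IsqQT (N : ℕ) (M : Fin (4*N+2) → Fin (4*N+2) → ℤ) : Prop :=
  (∀ i j : Fin (4*N+2),
      ¬((i.val = 2*N ∨ i.val = 2*N+1) ∧ (j.val = 2*N ∨ j.val = 2*N+1)) →
      M i j = M j i.rev) ∧
  (CentralNeg N M ∨ CentralPos N M)

/-- The number of qQTASMs of size `4N+2`. -/
noncomputable def numqQT (N : ℕ) : ℕ :=
  Nat.card {M : Fin (4*N+2) → Fin (4*N+2) → ℤ // IsASM M ∧ IsqQT N M}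

lemma qt_even_dvd (L : ℕ) (M : Fin (2*L) → Fin (2*L) → ℤ)
    (hA : IsASM M) (hQ : IsQT M) : 4 ∣ 2*L := by
  have hS : ∑ p : Fin (2*L) × Fin (2*L), M p.1 p.2 = ((2*L : ℕ) : ℤ) := by
    rw [Fintype.sum_prod_type]
    simp [hA.2.2.2.1]
  set f : Fin (2*L) × Fin (2*L) → ℤ := fun p => M p.1 p.2 with hf
  set T : ℤ := ∑ p ∈ univ.filter (fun p : Fin (2*L) × Fin (2*L) => p.1.val < L ∧ p.2.val < L), f p with hT
  have hrev : ∀ i : Fin (2*L), (Fin.rev i).val = 2*L - (i.val + 1) := fun i => Fin.val_rev i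
  have h2 : ∑ p ∈ univ.filter (fun p : Fin (2*L) × Fin (2*L) => p.1.val < L ∧ ¬ p.2.val < L), f p = T := by
    rw [hT]
    refine Finset.sum_nbij' (fun p => (p.2.rev, p.1)) (fun p => (p.2, p.1.rev)) ?_ ?_ ?_ ?_ ?_
    · intro a ha
      simp only [mem_filter, mem_univ, true_and] at ha ⊢
      have := a.1.isLt; have := a.2.isLt
      rw [hrev]; omega
    · intro a ha
      simp only [mem_filter, mem_univ, true_and] at ha ⊢
      have := a.1.isLt; have := a.2.isLt
      rw [hrev]; omega
    · intro a _; simp [Fin.rev_rev]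
    · intro a _; simp [Fin.rev_rev]
    · intro a _
      show M a.1 a.2 = M a.2.rev a.1
      rw [hQ a.2.rev a.1, Fin.rev_rev]
  have h3 : ∑ p ∈ univ.filter (fun p : Fin (2*L) × Fin (2*L) => ¬ p.1.val < L ∧ ¬ p.2.val < L), f p = T := by
    rw [hT]
    refine Finset.sum_nbij' (fun p => (p.1.rev, p.2.rev)) (fun p => (p.1.rev, p.2.rev)) ?_ ?_ ?_ ?_ ?_
    · intro a ha
      simp only [mem_filter, mem_univ, true_and] at ha ⊢
      have := a.1.isLt; have := a.2.isLt
      rw [hrev, hrev]; omega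
    · intro a ha
      simp only [mem_filter, mem_univ, true_and] at ha ⊢
      have := a.1.isLt; have := a.2.isLt
      rw [hrev, hrev]; omega
    · intro a _; simp [Fin.rev_rev]
    · intro a _; simp [Fin.rev_rev]
    · intro a _
      show M a.1 a.2 = M a.1.rev a.2.rev
      rw [hQ a.1 a.2, hQ a.2 a.1.rev]
  have h4 : ∑ p ∈ univ.filter (fun p : Fin (2*L) × Fin (2*L) => ¬ p.1.val < L ∧ p.2.val < L), f p = T := by
    rw [hT]
    refine Finset.sum_nbij' (fun p => (p.2, p.1.rev)) (fun p => (p.2.rev, p.1)) ?_ ?_ ?_ ?_ ?_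
    · intro a ha
      simp only [mem_filter, mem_univ, true_and] at ha ⊢
      have := a.1.isLt; have := a.2.isLt
      rw [hrev]; omega
    · intro a ha
      simp only [mem_filter, mem_univ, true_and] at ha ⊢
      have := a.1.isLt; have := a.2.isLt
      rw [hrev]; omega
    · intro a _; simp [Fin.rev_rev]
    · intro a _; simp [Fin.rev_rev]
    · intro a _; exact hQ a.1 a.2
  have hsplit : ∑ p : Fin (2*L) × Fin (2*L), M p.1 p.2 = 4 * T := by
    have e1 : ∑ p : Fin (2*L) × Fin (2*L), f p
        = ∑ p ∈ univ.filter (fun p : Fin (2*L) × Fin (2*L) => p.1.val < L), f p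
        + ∑ p ∈ univ.filter (fun p : Fin (2*L) × Fin (2*L) => ¬ p.1.val < L), f p :=
      (Finset.sum_filter_add_sum_filter_not _ _ _).symm
    have e2 : ∑ p ∈ univ.filter (fun p : Fin (2*L) × Fin (2*L) => p.1.val < L), f p
        = ∑ p ∈ univ.filter (fun p : Fin (2*L) × Fin (2*L) => p.1.val < L ∧ p.2.val < L), f p
        + ∑ p ∈ univ.filter (fun p : Fin (2*L) × Fin (2*L) => p.1.val < L ∧ ¬ p.2.val < L), f p := by
      rw [← Finset.sum_filter_add_sum_filter_not
        (univ.filter (fun p : Fin (2*L) × Fin (2*L) => p.1.val < L)) (fun p => p.2.val < L) f,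
        Finset.filter_filter, Finset.filter_filter]
    have e3 : ∑ p ∈ univ.filter (fun p : Fin (2*L) × Fin (2*L) => ¬ p.1.val < L), f p
        = ∑ p ∈ univ.filter (fun p : Fin (2*L) × Fin (2*L) => ¬ p.1.val < L ∧ p.2.val < L), f p
        + ∑ p ∈ univ.filter (fun p : Fin (2*L) × Fin (2*L) => ¬ p.1.val < L ∧ ¬ p.2.val < L), f p := by
      rw [← Finset.sum_filter_add_sum_filter_not
        (univ.filter (fun p : Fin (2*L) × Fin (2*L) => ¬ p.1.val < L)) (fun p => p.2.val < L) f,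
        Finset.filter_filter, Finset.filter_filter]
    calc ∑ p : Fin (2*L) × Fin (2*L), M p.1 p.2 = ∑ p : Fin (2*L) × Fin (2*L), f p := rfl
      _ = T + T + (T + T) := by rw [e1, e2, e3, ← hT, h2, h3, h4]
      _ = 4 * T := by ring
  have h4n : (4 : ℤ) ∣ ((2*L : ℕ) : ℤ) := ⟨T, by rw [← hS, hsplit]⟩
  exact_mod_cast h4n

lemma qt_even_dvd' {n : ℕ} (hn : n % 2 = 0) (M : Fin n → Fin n → ℤ)
    (hA : IsASM M) (hQ : IsQT M) : 4 ∣ n := by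
  obtain ⟨L, rfl⟩ : ∃ L, n = 2*L := ⟨n/2, by omega⟩
  exact qt_even_dvd L M hA hQ

/-- A quarter-turn symmetric ASM of even size `2L` forces `4 ∣ 2L`; in particular
there is no QTASM of size `4N+2`. -/
theorem no_QTASM_of_size_4N_add_two :
    (∀ L : ℕ, ∀ M : Fin (2*L) → Fin (2*L) → ℤ, IsASM M → IsQT M → 4 ∣ 2*L) ∧
    (∀ N : ℕ, ¬ ∃ M : Fin (4*N+2) → Fin (4*N+2) → ℤ, IsASM M ∧ IsQT M) := by
  refine ⟨qt_even_dvd, ?_⟩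
  rintro N ⟨M, hA, hQ⟩
  have : 4 ∣ 4*N+2 := qt_even_dvd' (by omega) M hA hQ
  omega
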